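/- arXiv:2405.00136 — 5 statements merged into one kernel-verified Lean document; each statement's English description precedes it below -/
import Mathlib

section
/- Let (z_k) be a discrete-time Markov chain on a measurable space with transition kernel T, let Z be a measurable safe set partitioned into measurable sets Z_1,...,Z_K, and let B be the piecewise constant function taking value b_i ≥ 0 on Z_i and value 1 outside Z. Suppose there exist scalars β, η ≥ 0 such that (i) b_i ≤ η for every i with Z_i intersecting the initial set Z_0 ⊆ Z, and (ii) for every i and every z ∈ Z_i, ∑_{j=1}^K b_j · T(Z_j | z) + T(complement of Z | z) ≤ b_i + β. Then for every N ∈ ℕ and every initial state z_0 ∈ Z_0, the probability that z_k ∈ Z for all k ≤ N is at least 1 − (η + βN). -/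
open MeasureTheory

noncomputable def safeProb {S : Type*} [MeasurableSpace S] (T : S → Measure S)
    (Z : Set S) : ℕ → S → ENNReal
  | 0, z => Z.indicator 1 z
  | N + 1, z => Z.indicator (fun z' => ∫⁻ y, safeProb T Z N y ∂(T z')) z

theorem pwc_sbf_safety {S : Type*} [MeasurableSpace S] (T : S → Measure S)
    (hT : ∀ z, IsProbabilityMeasure (T z))
    (K : ℕ) (Zpart : Fin K → Set S) (Z Z0 : Set S)
    (hZ : Z = ⋃ i, Zpart i)
    (hdisj : Pairwise (Function.onFun Disjoint Zpart))
    (hmeas : ∀ i, MeasurableSet (Zpart i))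
    (hZ0 : Z0 ⊆ Z)
    (b : Fin K → ℝ) (hb : ∀ i, 0 ≤ b i)
    (η β : ℝ) (hη : 0 ≤ η) (hβ : 0 ≤ β)
    (hinit : ∀ i, (Zpart i ∩ Z0).Nonempty → b i ≤ η)
    (hdrift : ∀ i, ∀ z ∈ Zpart i,
      ∑ j, b j * (T z (Zpart j)).toReal + (T z Zᶜ).toReal ≤ b i + β) :
    ∀ N : ℕ, ∀ z0 ∈ Z0, 1 - (η + β * N) ≤ (safeProb T Z N z0).toReal := by
  have hZmeas : MeasurableSet Z := hZ ▸ MeasurableSet.iUnion hmeas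
  have hfin : ∀ z (s : Set S), T z s ≠ ⊤ := fun z s => measure_ne_top (T z) s
  -- safeProb is bounded by 1
  have hle1 : ∀ N z, safeProb T Z N z ≤ 1 := by
    intro N
    induction N with
    | zero =>
      intro z
      by_cases hz : z ∈ Z <;> simp [safeProb, Set.indicator_apply, hz]
    | succ N ih =>
      intro z
      by_cases hz : z ∈ Z
      · have : (∫⁻ y, safeProb T Z N y ∂(T z)) ≤ ∫⁻ _, 1 ∂(T z) := lintegral_mono ih
        simpa [safeProb, Set.indicator_apply, hz] using this
      · simp [safeProb, Set.indicator_apply, hz]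
  -- main inductive bound
  have main : ∀ N : ℕ, ∀ i, ∀ z ∈ Zpart i,
      ENNReal.ofReal (1 - (b i + β * N)) ≤ safeProb T Z N z := by
    intro N
    induction N with
    | zero =>
      intro i z hz
      have hzZ : z ∈ Z := hZ ▸ Set.mem_iUnion.mpr ⟨i, hz⟩
      have : (1 : ℝ) - (b i + β * (0:ℕ)) ≤ 1 := by
        have := hb i; simp; linarith
      calc ENNReal.ofReal (1 - (b i + β * (0:ℕ))) ≤ ENNReal.ofReal 1 :=
            ENNReal.ofReal_le_ofReal this
        _ = safeProb T Z 0 z := by simp [safeProb, Set.indicator_apply, hzZ]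
    | succ N ih =>
      intro i z hz
      have hzZ : z ∈ Z := hZ ▸ Set.mem_iUnion.mpr ⟨i, hz⟩
      -- real quantities
      set c : Fin K → ℝ := fun j => max (1 - (b j + β * N)) 0 with hc
      set p : Fin K → ℝ := fun j => (T z (Zpart j)).toReal with hp
      have hpnn : ∀ j, 0 ≤ p j := fun j => ENNReal.toReal_nonneg
      have hcnn : ∀ j, 0 ≤ c j := fun j => le_max_right _ _
      set r : ℝ := (T z Zᶜ).toReal with hr
      have hrnn : 0 ≤ r := ENNReal.toReal_nonneg
      -- T z Z = ∑ T z (Zpart j)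
      have hTZ : T z Z = ∑ j, T z (Zpart j) := by
        rw [hZ, measure_iUnion hdisj hmeas, tsum_fintype]
      have hsum1 : ∑ j, p j + r = 1 := by
        have h := measure_add_measure_compl (μ := T z) hZmeas
        rw [hTZ, measure_univ] at h
        have := congrArg ENNReal.toReal h
        rw [ENNReal.toReal_add (by simp [hfin]) (hfin z Zᶜ), ENNReal.toReal_sum
          (fun j _ => hfin z (Zpart j))] at this
        simpa [hp, hr] using this
      have hpb1 : ∑ j, p j ≤ 1 := by linarith
      have hdr : ∑ j, b j * p j + r ≤ b i + β := hdrift i z hz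
      -- real inequality
      have hreal : 1 - (b i + β * (N + 1 : ℕ)) ≤ ∑ j, c j * p j := by
        have h1 : ∑ j, (1 - (b j + β * N)) * p j ≤ ∑ j, c j * p j :=
          Finset.sum_le_sum fun j _ =>
            mul_le_mul_of_nonneg_right (le_max_left _ _) (hpnn j)
        have h2 : ∑ j, (1 - (b j + β * N)) * p j
            = ∑ j, p j - ∑ j, b j * p j - β * N * ∑ j, p j := by
          rw [Finset.mul_sum, ← Finset.sum_sub_distrib, ← Finset.sum_sub_distrib]
          exact Finset.sum_congr rfl fun j _ => by ring
        have h3 : β * N * ∑ j, p j ≤ β * N :=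
          mul_le_of_le_one_right (mul_nonneg hβ (Nat.cast_nonneg N)) hpb1
        push_cast
        rw [h2] at h1
        linarith
      -- ENNReal side
      have hstep : ∑ j, ENNReal.ofReal (c j) * T z (Zpart j)
          = ENNReal.ofReal (∑ j, c j * p j) := by
        rw [ENNReal.ofReal_sum_of_nonneg (fun j _ => mul_nonneg (hcnn j) (hpnn j))]
        refine Finset.sum_congr rfl fun j _ => ?_
        rw [ENNReal.ofReal_mul (hcnn j), ENNReal.ofReal_toReal (hfin z (Zpart j))]
      -- pointwise lower bound for the integrand
      have hpoint : ∀ y, ∑ j, (Zpart j).indicator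
          (fun _ => ENNReal.ofReal (c j)) y ≤ safeProb T Z N y := by
        intro y
        by_cases hy : ∃ j, y ∈ Zpart j
        · obtain ⟨j, hyj⟩ := hy
          have hsingle : ∑ j', (Zpart j').indicator
              (fun _ => ENNReal.ofReal (c j')) y = ENNReal.ofReal (c j) := by
            rw [Finset.sum_eq_single j]
            · simp [Set.indicator_apply, hyj]
            · intro j' _ hne
              have : y ∉ Zpart j' := fun hy' =>
                Set.disjoint_left.mp (hdisj hne) hy' hyj
              simp [Set.indicator_apply, this]
            · simp
          rw [hsingle]
          have := ih j y hyj
          calc ENNReal.ofReal (c j) = ENNReal.ofReal (1 - (b j + β * N)) := by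
                rcases le_or_gt (1 - (b j + β * N)) 0 with h | h
                · simp [hc, max_eq_right h, ENNReal.ofReal_of_nonpos h]
                · simp [hc, max_eq_left h.le]
            _ ≤ safeProb T Z N y := this
        · push_neg at hy
          have : ∀ j ∈ Finset.univ, (Zpart j).indicator
              (fun _ => ENNReal.ofReal (c j)) y = 0 := fun j _ => by
            simp [Set.indicator_apply, hy j]
          rw [Finset.sum_eq_zero this]
          exact zero_le
      -- integral lower bound
      have hint : ∑ j, ENNReal.ofReal (c j) * T z (Zpart j)
          ≤ ∫⁻ y, safeProb T Z N y ∂(T z) := by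
        have hmeasind : ∀ j ∈ Finset.univ, Measurable fun y =>
            (Zpart j).indicator (fun _ => ENNReal.ofReal (c j)) y := fun j _ =>
          measurable_const.indicator (hmeas j)
        calc ∑ j, ENNReal.ofReal (c j) * T z (Zpart j)
            = ∑ j, ∫⁻ y, (Zpart j).indicator (fun _ => ENNReal.ofReal (c j)) y ∂(T z) := by
              refine Finset.sum_congr rfl fun j _ => ?_
              rw [lintegral_indicator_const (hmeas j)]
          _ = ∫⁻ y, ∑ j, (Zpart j).indicator (fun _ => ENNReal.ofReal (c j)) y ∂(T z) :=
              (lintegral_finset_sum _ fun j hj => hmeasind j hj).symm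
          _ ≤ ∫⁻ y, safeProb T Z N y ∂(T z) := lintegral_mono hpoint
      calc ENNReal.ofReal (1 - (b i + β * (N + 1 : ℕ)))
          ≤ ENNReal.ofReal (∑ j, c j * p j) := ENNReal.ofReal_le_ofReal hreal
        _ = ∑ j, ENNReal.ofReal (c j) * T z (Zpart j) := hstep.symm
        _ ≤ ∫⁻ y, safeProb T Z N y ∂(T z) := hint
        _ = safeProb T Z (N + 1) z := by
              simp [safeProb, Set.indicator_apply, hzZ]
  -- conclude
  intro N z0 hz0
  have hz0Z : z0 ∈ Z := hZ0 hz0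
  obtain ⟨i, hi⟩ : ∃ i, z0 ∈ Zpart i := by
    rw [hZ] at hz0Z; exact Set.mem_iUnion.mp hz0Z
  have hbi : b i ≤ η := hinit i ⟨z0, hi, hz0⟩
  rcases le_or_gt (1 - (η + β * N)) 0 with h | h
  · exact h.trans ENNReal.toReal_nonneg
  · have h1 : ENNReal.ofReal (1 - (b i + β * N)) ≤ safeProb T Z N z0 := main N i z0 hi
    have h2 : (safeProb T Z N z0).toReal ≥ 1 - (b i + β * N) := by
      have hne : safeProb T Z N z0 ≠ ⊤ := ne_top_of_le_ne_top ENNReal.one_ne_top (hle1 N z0)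
      have := ENNReal.toReal_mono hne h1
      rwa [ENNReal.toReal_ofReal (by linarith)] at this
    linarith
end

section
/- Let (z_k) be a Markov chain with kernel T, Z a measurable set, and B: ℝ^{n_z} → [0,∞) a measurable function with B(z) ≥ 1 for all z ∉ Z. If E[B(z_{k+1}) | z_k = z] ≤ B(z) + β for all z ∈ Z and B(z_0) ≤ η, then the probability that the chain exits Z within N steps is at most η + βN. -/
open MeasureTheory

theorem barrier_exit_probability_bound {S : Type*} [MeasurableSpace S]
    (T : S → Measure S) (hT : ∀ z, IsProbabilityMeasure (T z))
    (Z : Set S) (hZ : MeasurableSet Z)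
    (B : S → ENNReal) (hBmeas : Measurable B)
    (hBout : ∀ z ∉ Z, 1 ≤ B z)
    (β η : ENNReal)
    (hdrift : ∀ z ∈ Z, ∫⁻ y, B y ∂(T z) ≤ B z + β)
    (z0 : S) (hz0 : B z0 ≤ η) (N : ℕ) :
    1 - safeProb T Z N z0 ≤ η + β * N := by
  have key : ∀ (N : ℕ) (z : S), (1 : ENNReal) ≤ safeProb T Z N z + (B z + β * N) := by
    intro N
    induction N with
    | zero =>
      intro z
      by_cases hz : z ∈ Z
      · simp [safeProb, Set.indicator_of_mem hz]
      · have := hBout z hz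
        simp only [safeProb, Set.indicator_of_notMem hz, zero_add]
        exact le_add_right this
    | succ N ih =>
      intro z
      by_cases hz : z ∈ Z
      · have h1 : (1 : ENNReal) = ∫⁻ _, 1 ∂(T z) := by
          simp [lintegral_one, (hT z).measure_univ]
        have hle : ∫⁻ _, (1 : ENNReal) ∂(T z)
            ≤ ∫⁻ y, (safeProb T Z N y + (B y + β * N)) ∂(T z) :=
          lintegral_mono fun y => ih y
        have hadd : ∫⁻ y, (safeProb T Z N y + (B y + β * N)) ∂(T z)
            = (∫⁻ y, safeProb T Z N y ∂(T z)) + ((∫⁻ y, B y ∂(T z)) + β * N) := by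
          rw [lintegral_add_right (g := fun y => B y + β * (N : ENNReal)) _ (hBmeas.add measurable_const),
            lintegral_add_right _ measurable_const, lintegral_const,
            (hT z).measure_univ, mul_one]
        have hB := hdrift z hz
        have : (1 : ENNReal) ≤ (∫⁻ y, safeProb T Z N y ∂(T z)) + ((B z + β) + β * N) := by
          rw [h1]
          refine hle.trans ?_
          rw [hadd]
          exact add_le_add_right (add_le_add_left hB _) _
        simpa [safeProb, Set.indicator_of_mem hz, Nat.cast_succ, mul_add, mul_one,
          add_assoc, add_comm, add_left_comm] using this
      · have := hBout z hz
        simp only [safeProb, Set.indicator_of_notMem hz, zero_add]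
        exact le_add_right this
  have := key N z0
  rw [tsub_le_iff_right]
  calc (1 : ENNReal) ≤ safeProb T Z N z0 + (B z0 + β * N) := this
    _ ≤ safeProb T Z N z0 + (η + β * N) := by
        exact add_le_add_right (add_le_add_left hz0 _) _
    _ = η + β * N + safeProb T Z N z0 := by ring
end

section
/- Let f: Z → ℝ^n be measurable, C ⊂ ℝ^n a measurable set of 'uncertainty' values with probability Pr(C) under a measure μ, and X ⊂ ℝ^n measurable. Define Post(A, C) = { f(z) + c : z ∈ A, c ∈ C } for A ⊆ Z. Then for any z ∈ A and any countable measurable partition 𝒞 of the uncertainty space: (a) ∑_{C ∈ 𝒞} 1[Post(A, C) ⊆ X] · μ(C) ≤ μ{ w : f(z) + w ∈ X }, and (b) μ{ w : f(z) + w ∈ X } ≤ ∑_{C ∈ 𝒞} 1[Post(A, C) ∩ X ≠ ∅] · μ(C). -/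
open MeasureTheory Classical

/-- `post f A C = { f z + c : z ∈ A, c ∈ C }`, the learned image of `A` under
uncertainties in `C`. -/
def post {α E : Type*} [Add E] (f : α → E) (A : Set α) (C : Set E) : Set E :=
  (fun p : α × E => f p.1 + p.2) '' (A ×ˢ C)

theorem transition_kernel_bounds {α : Type*} {n : ℕ} [MeasurableSpace α]
    (f : α → (Fin n → ℝ)) (hf : Measurable f)
    (μ : Measure (Fin n → ℝ)) [IsProbabilityMeasure μ]
    (X : Set (Fin n → ℝ)) (hX : MeasurableSet X)
    (C : ℕ → Set (Fin n → ℝ))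
    (hCmeas : ∀ i, MeasurableSet (C i))
    (hCdisj : Pairwise (Function.onFun Disjoint C))
    (hCcover : ⋃ i, C i = Set.univ)
    (A : Set α) (z : α) (hz : z ∈ A) :
    (∑' i, if post f A (C i) ⊆ X then μ (C i) else 0) ≤ μ {w | f z + w ∈ X} ∧
    μ {w | f z + w ∈ X} ≤ ∑' i, if (post f A (C i) ∩ X).Nonempty then μ (C i) else 0 := by
  set S : Set (Fin n → ℝ) := {w | f z + w ∈ X} with hS
  have hSmeas : MeasurableSet S := by
    have : Measurable fun w : Fin n → ℝ => f z + w := measurable_const.add measurable_id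
    exact this hX
  have hmem : ∀ i, ∀ w ∈ C i, w ∈ S → ((f z + w) ∈ post f A (C i) ∩ X) := by
    intro i w hw hwS
    exact ⟨⟨(z, w), ⟨hz, hw⟩, rfl⟩, hwS⟩
  have hdecomp : μ S = ∑' i, μ (C i ∩ S) := by
    have h1 : μ (⋃ i, C i ∩ S) = ∑' i, μ (C i ∩ S) :=
      measure_iUnion (fun i j hij => (hCdisj hij).mono
        Set.inter_subset_left Set.inter_subset_left)
        (fun i => (hCmeas i).inter hSmeas)
    rw [← h1]
    congr 1
    rw [← Set.iUnion_inter, hCcover, Set.univ_inter]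
  constructor
  · rw [hdecomp]
    refine ENNReal.tsum_le_tsum fun i => ?_
    by_cases h : post f A (C i) ⊆ X
    · simp only [h, if_true]
      have : C i ⊆ C i ∩ S := fun w hw =>
        ⟨hw, h ⟨(z, w), ⟨hz, hw⟩, rfl⟩⟩
      exact measure_mono this
    · simp [h]
  · rw [hdecomp]
    refine ENNReal.tsum_le_tsum fun i => ?_
    by_cases h : (post f A (C i) ∩ X).Nonempty
    · simp only [h, if_true]
      exact measure_mono Set.inter_subset_left
    · simp only [h, if_false]
      have : C i ∩ S = ∅ := by
        by_contra hne
        obtain ⟨w, hw, hwS⟩ := Set.nonempty_iff_ne_empty.mpr hne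
        exact h ⟨f z + w, hmem i w hw hwS⟩
      simp [this]
end

section
/- Suppose for every i ∈ {1,...,K}, every l ∈ {1,...,L}, and every feasible probability vector p_i^l ∈ 𝒫_i^l we have ∑_{j=1}^K b_j p^l_{ij} + p^l_{iu} ≤ b_i + β_i^l with 0 ≤ β_i^l ≤ β, and b_i ≤ η for all i with X_i ∩ X_0 ≠ ∅. If the true transition kernel of the system satisfies (T(X_1|x,u),...,T(X_K|x,u), T(X_u|x,u)) ∈ 𝒫_i^l for all x ∈ X_i and u ∈ U_l, then for every strategy π: X_s → U (measurable, with π(x) ∈ U for all x) and every x_0 ∈ X_0, the probability that the closed-loop chain stays in X_s for N steps is at least 1 − (η + βN). -/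
open MeasureTheory

theorem pwc_sbf_all_strategies_safe {S U : Type*} [MeasurableSpace S] [MeasurableSpace U]
    (T : S × U → Measure S) (hT : ∀ p, IsProbabilityMeasure (T p))
    (K L : ℕ) (Xs X0 : Set S) (Xpart : Fin K → Set S) (Upart : Fin L → Set U)
    (hXs : Xs = ⋃ i, Xpart i)
    (hXdisj : Pairwise (Function.onFun Disjoint Xpart))
    (hXmeas : ∀ i, MeasurableSet (Xpart i))
    (hX0 : X0 ⊆ Xs)
    (hUcover : (⋃ l, Upart l) = Set.univ)
    (hUdisj : Pairwise (Function.onFun Disjoint Upart))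
    (P : Fin K → Fin L → Set ((Fin K → ℝ) × ℝ))
    (b : Fin K → ℝ) (hb : ∀ i, 0 ≤ b i)
    (η β : ℝ) (βil : Fin K → Fin L → ℝ)
    (hβil : ∀ i l, 0 ≤ βil i l ∧ βil i l ≤ β)
    (hinit : ∀ i, (Xpart i ∩ X0).Nonempty → b i ≤ η)
    (hdrift : ∀ i l, ∀ q ∈ P i l, ∑ j, b j * q.1 j + q.2 ≤ b i + βil i l)
    (hkernel : ∀ i l, ∀ x ∈ Xpart i, ∀ u ∈ Upart l,
      ((fun j => (T (x, u) (Xpart j)).toReal), (T (x, u) Xsᶜ).toReal) ∈ P i l)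
    (π : S → U) (hπ : Measurable π) (N : ℕ) :
    ∀ x0 ∈ X0,
      1 - (η + β * N) ≤ (safeProb (fun x => T (x, π x)) Xs N x0).toReal := by
  intro x0 hx0
  set κ : S → Measure S := fun x => T (x, π x) with hκ
  have hκprob : ∀ x, IsProbabilityMeasure (κ x) := fun x => hT _
  have hXsm : MeasurableSet Xs := by
    rw [hXs]; exact MeasurableSet.iUnion hXmeas
  -- safeProb is at most 1
  have hle1 : ∀ n x, safeProb κ Xs n x ≤ 1 := by
    intro n
    induction n with
    | zero =>
      intro x
      by_cases h : x ∈ Xs <;> simp [safeProb, Set.indicator, h]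
    | succ n ih =>
      intro x
      by_cases h : x ∈ Xs
      · simp only [safeProb, Set.indicator_of_mem h]
        calc ∫⁻ y, safeProb κ Xs n y ∂(κ x) ≤ ∫⁻ _, 1 ∂(κ x) := lintegral_mono ih
          _ = 1 := by simp [lintegral_one, (hκprob x).measure_univ]
      · simp [safeProb, Set.indicator_of_notMem h]
  have hne_top : ∀ n x, safeProb κ Xs n x ≠ ⊤ := fun n x =>
    ne_top_of_le_ne_top ENNReal.one_ne_top (hle1 n x)
  -- safeProb is zero outside Xs
  have hzero : ∀ n x, x ∉ Xs → safeProb κ Xs n x = 0 := by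
    intro n x hx
    cases n <;> simp [safeProb, Set.indicator_of_notMem hx]
  -- β ≥ 0
  obtain ⟨i0, hi0⟩ : ∃ i, x0 ∈ Xpart i := by
    have := hX0 hx0; rw [hXs] at this; exact Set.mem_iUnion.mp this
  obtain ⟨l0, hl0⟩ : ∃ l, π x0 ∈ Upart l := by
    have : π x0 ∈ ⋃ l, Upart l := by rw [hUcover]; trivial
    exact Set.mem_iUnion.mp this
  have hβ : 0 ≤ β := le_trans (hβil i0 l0).1 (hβil i0 l0).2
  -- the key inductive inequality
  have key : ∀ n : ℕ, ∀ i : Fin K, ∀ x ∈ Xpart i,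
      1 ≤ safeProb κ Xs n x + ENNReal.ofReal (b i + β * n) := by
    intro n
    induction n with
    | zero =>
      intro i x hx
      have hxXs : x ∈ Xs := by rw [hXs]; exact Set.mem_iUnion.mpr ⟨i, hx⟩
      simp only [safeProb, Set.indicator_of_mem hxXs, Pi.one_apply]
      exact le_add_right le_rfl
    | succ n ih =>
      intro i x hx
      have hxXs : x ∈ Xs := by rw [hXs]; exact Set.mem_iUnion.mpr ⟨i, hx⟩
      obtain ⟨l, hl⟩ : ∃ l, π x ∈ Upart l := by
        have : π x ∈ ⋃ l, Upart l := by rw [hUcover]; trivial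
        exact Set.mem_iUnion.mp this
      set μ := κ x with hμdef
      haveI : IsProbabilityMeasure μ := hκprob x
      set q : Fin K → ℝ := fun j => (μ (Xpart j)).toReal with hq
      set qu : ℝ := (μ Xsᶜ).toReal with hqu
      have hmemP : ((fun j => (μ (Xpart j)).toReal), (μ Xsᶜ).toReal) ∈ P i l :=
        hkernel i l x hx (π x) hl
      have hd : ∑ j, b j * q j + qu ≤ b i + βil i l := hdrift i l _ hmemP
      have hfin : ∀ j, μ (Xpart j) ≠ ⊤ := fun j => measure_ne_top μ _
      have hfinc : μ Xsᶜ ≠ ⊤ := measure_ne_top μ _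
      have hqnn : ∀ j, 0 ≤ q j := fun j => ENNReal.toReal_nonneg
      have hqunn : 0 ≤ qu := ENNReal.toReal_nonneg
      -- total measure decomposition
      have hXsum : μ Xs = ∑ j, μ (Xpart j) := by
        rw [hXs, measure_iUnion hXdisj hXmeas, tsum_fintype]
      have htot : μ Xsᶜ + ∑ j, μ (Xpart j) = 1 := by
        rw [← hXsum, add_comm, measure_add_measure_compl hXsm]
        exact (hκprob x).measure_univ
      -- sum of q_j ≤ 1
      have hsumq : ∑ j, q j ≤ 1 := by
        have h1 : ∑ j, μ (Xpart j) ≤ 1 := by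
          rw [← htot]; exact le_add_self
        have h2 : (∑ j, μ (Xpart j)).toReal = ∑ j, q j := by
          rw [ENNReal.toReal_sum (fun j _ => hfin j)]
        calc ∑ j, q j = (∑ j, μ (Xpart j)).toReal := h2.symm
          _ ≤ (1 : ENNReal).toReal := ENNReal.toReal_mono ENNReal.one_ne_top h1
          _ = 1 := by simp
      -- bound each cell's measure
      have hcell : ∀ j : Fin K, μ (Xpart j) ≤
          (∫⁻ y in Xpart j, safeProb κ Xs n y ∂μ) + ENNReal.ofReal (b j + β * n) * μ (Xpart j) := by
        intro j
        have h1 : μ (Xpart j) = ∫⁻ _ in Xpart j, (1 : ENNReal) ∂μ := by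
          rw [setLIntegral_const, one_mul]
        have h2 : ∫⁻ y in Xpart j, (1 : ENNReal) ∂μ ≤
            ∫⁻ y in Xpart j, (safeProb κ Xs n y + ENNReal.ofReal (b j + β * n)) ∂μ :=
          setLIntegral_mono' (hXmeas j) (fun y hy => ih j y hy)
        have h3 : ∫⁻ y in Xpart j, (safeProb κ Xs n y + ENNReal.ofReal (b j + β * n)) ∂μ
            = (∫⁻ y in Xpart j, safeProb κ Xs n y ∂μ) + ENNReal.ofReal (b j + β * n) * μ (Xpart j) := by
          rw [lintegral_add_right _ measurable_const, setLIntegral_const]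
        calc μ (Xpart j) = ∫⁻ _ in Xpart j, (1 : ENNReal) ∂μ := h1
          _ ≤ _ := h2
          _ = _ := h3
      -- sum over cells
      have hsumcell : ∑ j, μ (Xpart j) ≤
          (∫⁻ y, safeProb κ Xs n y ∂μ) + ∑ j, ENNReal.ofReal (b j + β * n) * μ (Xpart j) := by
        calc ∑ j, μ (Xpart j)
            ≤ ∑ j, ((∫⁻ y in Xpart j, safeProb κ Xs n y ∂μ) + ENNReal.ofReal (b j + β * n) * μ (Xpart j)) :=
              Finset.sum_le_sum (fun j _ => hcell j)
          _ = (∑ j, ∫⁻ y in Xpart j, safeProb κ Xs n y ∂μ)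
              + ∑ j, ENNReal.ofReal (b j + β * n) * μ (Xpart j) := Finset.sum_add_distrib
          _ ≤ (∫⁻ y, safeProb κ Xs n y ∂μ) + ∑ j, ENNReal.ofReal (b j + β * n) * μ (Xpart j) := by
              gcongr
              calc ∑ j, ∫⁻ y in Xpart j, safeProb κ Xs n y ∂μ
                  = ∑' j, ∫⁻ y in Xpart j, safeProb κ Xs n y ∂μ := (tsum_fintype _).symm
                _ = ∫⁻ y in ⋃ j, Xpart j, safeProb κ Xs n y ∂μ :=
                    (lintegral_iUnion hXmeas hXdisj _).symm
                _ ≤ ∫⁻ y, safeProb κ Xs n y ∂μ := setLIntegral_le_lintegral _ _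
      -- bound the constant part
      have hconst : μ Xsᶜ + ∑ j, ENNReal.ofReal (b j + β * n) * μ (Xpart j)
          ≤ ENNReal.ofReal (b i + β * (n + 1)) := by
        have hμj : ∀ j, μ (Xpart j) = ENNReal.ofReal (q j) := fun j =>
          (ENNReal.ofReal_toReal (hfin j)).symm
        have hμc : μ Xsᶜ = ENNReal.ofReal qu := (ENNReal.ofReal_toReal hfinc).symm
        have hstep : ∀ j : Fin K, ENNReal.ofReal (b j + β * n) * μ (Xpart j)
            = ENNReal.ofReal ((b j + β * n) * q j) := by
          intro j
          rw [hμj j, ← ENNReal.ofReal_mul (add_nonneg (hb j) (by positivity))]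
        calc μ Xsᶜ + ∑ j, ENNReal.ofReal (b j + β * n) * μ (Xpart j)
            = ENNReal.ofReal qu + ∑ j, ENNReal.ofReal ((b j + β * n) * q j) := by
              rw [hμc]; congr 1; exact Finset.sum_congr rfl (fun j _ => hstep j)
          _ = ENNReal.ofReal (qu + ∑ j, (b j + β * n) * q j) := by
              rw [← ENNReal.ofReal_sum_of_nonneg
                  (fun j _ => mul_nonneg (add_nonneg (hb j) (by positivity)) (hqnn j)),
                ← ENNReal.ofReal_add hqunn (Finset.sum_nonneg
                  (fun j _ => mul_nonneg (add_nonneg (hb j) (by positivity)) (hqnn j)))]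
          _ ≤ ENNReal.ofReal (b i + β * (n + 1)) := by
              apply ENNReal.ofReal_le_ofReal
              have hexp : qu + ∑ j, (b j + β * n) * q j
                  = (∑ j, b j * q j + qu) + β * n * (∑ j, q j) := by
                simp only [add_mul, Finset.sum_add_distrib, Finset.mul_sum]
                ring
              have h2 : β * n * (∑ j, q j) ≤ β * n := by
                have : 0 ≤ β * n := by positivity
                calc β * n * (∑ j, q j) ≤ β * n * 1 := by
                      apply mul_le_mul_of_nonneg_left hsumq this
                  _ = β * n := mul_one _
              have h3 : βil i l ≤ β := (hβil i l).2
              push_cast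
              rw [hexp]
              nlinarith [hd]
      -- combine
      have hmain : (1 : ENNReal) ≤ (∫⁻ y, safeProb κ Xs n y ∂μ)
          + ENNReal.ofReal (b i + β * (n + 1)) := by
        calc (1 : ENNReal) = μ Xsᶜ + ∑ j, μ (Xpart j) := htot.symm
          _ ≤ μ Xsᶜ + ((∫⁻ y, safeProb κ Xs n y ∂μ) + ∑ j, ENNReal.ofReal (b j + β * n) * μ (Xpart j)) := by
              gcongr
          _ = (∫⁻ y, safeProb κ Xs n y ∂μ)
              + (μ Xsᶜ + ∑ j, ENNReal.ofReal (b j + β * n) * μ (Xpart j)) := by ring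
          _ ≤ (∫⁻ y, safeProb κ Xs n y ∂μ) + ENNReal.ofReal (b i + β * (n + 1)) := by
              gcongr
      have hsp : safeProb κ Xs (n + 1) x = ∫⁻ y, safeProb κ Xs n y ∂μ := by
        simp only [safeProb, Set.indicator_of_mem hxXs]
        rfl
      rw [hsp]
      convert hmain using 3
      push_cast; ring
  -- conclude
  have hbη : b i0 ≤ η := hinit i0 ⟨x0, hi0, hx0⟩
  have hkey := key N i0 x0 hi0
  have hηnn : 0 ≤ η := le_trans (hb i0) hbη
  have hcnn : 0 ≤ η + β * N := by positivity
  have hkey2 : (1 : ENNReal) ≤ safeProb κ Xs N x0 + ENNReal.ofReal (η + β * N) := by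
    refine le_trans hkey ?_
    gcongr
  have hfin : safeProb κ Xs N x0 ≠ ⊤ := hne_top N x0
  have := ENNReal.toReal_mono (by
      exact ENNReal.add_ne_top.mpr ⟨hfin, ENNReal.ofReal_ne_top⟩) hkey2
  rw [ENNReal.toReal_add hfin ENNReal.ofReal_ne_top, ENNReal.toReal_ofReal hcnn] at this
  simp only [ENNReal.toReal_one] at this
  linarith
end

section
/- Let (z_k) be a Markov chain with kernel T, and let B be a nonnegative measurable function with B ≥ 1 on Zᶜ and satisfying the drift condition E[B(z_1) | z_0 = z] ≤ B(z) + β for all z ∈ Z. Then for each N, the function z ↦ Pr[∃ k ≤ N : z_k ∉ Z | z_0 = z] is bounded above by B(z) + βN, proven by induction on N: the base case N = 0 gives Pr[z_0 ∉ Z] ≤ B(z_0) since B ≥ 1 on Zᶜ and B ≥ 0, and the inductive step uses the Markov property and the drift inequality. -/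
open MeasureTheory

lemma barrier_key {S : Type*} [MeasurableSpace S]
    (T : S → Measure S) (hT : ∀ z, IsProbabilityMeasure (T z))
    (Z : Set S)
    (B : S → ENNReal) (hBmeas : Measurable B)
    (hBout : ∀ z ∉ Z, 1 ≤ B z)
    (β : ENNReal)
    (hdrift : ∀ z ∈ Z, ∫⁻ y, B y ∂(T z) ≤ B z + β) :
    ∀ (N : ℕ) (z : S), 1 ≤ safeProb T Z N z + (B z + β * N) := by
  intro N
  induction N with
  | zero =>
    intro z
    by_cases hz : z ∈ Z
    · simp [safeProb, hz]
    · simp only [safeProb, Set.indicator_of_notMem hz, Nat.cast_zero, mul_zero, add_zero,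
        zero_add]
      exact hBout z hz
  | succ N ih =>
    intro z
    by_cases hz : z ∈ Z
    · simp only [safeProb, Set.indicator_of_mem hz]
      have h1 : (1 : ENNReal) ≤ ∫⁻ y, ((B y + β * N) + safeProb T Z N y) ∂(T z) := by
        calc (1 : ENNReal) = ∫⁻ _, 1 ∂(T z) := by simp [(hT z).measure_univ]
          _ ≤ _ := lintegral_mono fun y => (ih y).trans_eq (add_comm _ _)
      have h2 : ∫⁻ y, ((B y + β * N) + safeProb T Z N y) ∂(T z)
          = (∫⁻ y, (B y + β * N) ∂(T z)) + ∫⁻ y, safeProb T Z N y ∂(T z) :=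
        lintegral_add_left (hBmeas.add measurable_const) _
      have h3 : ∫⁻ y, (B y + β * N) ∂(T z) = (∫⁻ y, B y ∂(T z)) + β * N := by
        rw [lintegral_add_right _ measurable_const]
        simp [(hT z).measure_univ]
      calc (1 : ENNReal) ≤ _ := h1
        _ = (∫⁻ y, B y ∂(T z)) + β * N + ∫⁻ y, safeProb T Z N y ∂(T z) := by rw [h2, h3]
        _ ≤ (B z + β) + β * N + ∫⁻ y, safeProb T Z N y ∂(T z) := by
            gcongr; exact hdrift z hz
        _ = ∫⁻ y, safeProb T Z N y ∂(T z) + (B z + β * (↑N + 1)) := by ring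
        _ = ∫⁻ y, safeProb T Z N y ∂(T z) + (B z + β * ↑(N + 1)) := by norm_cast
    · simp only [safeProb, Set.indicator_of_notMem hz, zero_add]
      exact le_trans (hBout z hz) le_self_add

theorem barrier_unsafety_induction_bound {S : Type*} [MeasurableSpace S]
    (T : S → Measure S) (hT : ∀ z, IsProbabilityMeasure (T z))
    (Z : Set S) (hZ : MeasurableSet Z)
    (B : S → ENNReal) (hBmeas : Measurable B)
    (hBout : ∀ z ∉ Z, 1 ≤ B z)
    (β : ENNReal)
    (hdrift : ∀ z ∈ Z, ∫⁻ y, B y ∂(T z) ≤ B z + β) :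
    ∀ (N : ℕ) (z : S), 1 - safeProb T Z N z ≤ B z + β * N := by
  intro N z
  rw [tsub_le_iff_right, add_comm]
  exact barrier_key T hT Z B hBmeas hBout β hdrift N z
end
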